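/- Let X be an MPR process with polynomial martingales {M_n}. Then for every n ≥ 1, all nonnegative integers k_1, …, k_n, and all times 0 < s < u_1 < … < u_n, there exist continuous functions φ_j(u_1, …, u_n), j = 0, …, k_1 + … + k_n, such that almost surely E[M_{k_1}(u_1)·M_{k_2}(u_2)···M_{k_n}(u_n) | 𝔉_{≤s}] = Σ_{j=0}^{k_1+…+k_n} φ_j(u_1, …, u_n)·M_j(s). -/

import Mathlib

/-!
Induct on the number of factors: given `𝔉_{≤u_1}`, the product is a polynomial in `X_{u_1}` of
degree at most `∑ k_i` whose coefficients are continuous in `u`. For the step, the product of the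
factors at times `u_2 < ⋯ < u_n` given `𝔉_{≤u_2}` is such a polynomial; expanded in the basis
`M_l(·, u_2)` it reads `∑ c_l M_l(X_{u_2}, u_2)`, which the tower and martingale properties turn,
given `𝔉_{≤u_1}`, into `∑ c_l M_l(X_{u_1}, u_1)`, and the `𝔉_{≤u_1}`-measurable first factor is
pulled out. One more expansion, in the basis `M_l(·, u_1)`, and one more martingale step bring the
conditioning down to `𝔉_{≤s}`. Since `deg M_l = l`, expanding is a triangular elimination whose
pivots are nonvanishing leading coefficients, so the coefficients stay continuous.
-/

open MeasureTheory ProbabilityTheory Polynomial Filter Finset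

noncomputable section

variable {Ω : Type*}

/-- The σ-algebra of the past: `𝔉_{≤ s} = σ(X_u : 0 < u ≤ s)`. -/
def sigmaLE [MeasurableSpace Ω] (X : ℝ → Ω → ℝ) (s : ℝ) : MeasurableSpace Ω :=
  ⨆ u ∈ Set.Ioc (0 : ℝ) s, MeasurableSpace.comap (X u) inferInstance

/-- The σ-algebra of the future: `𝔉_{≥ s} = σ(X_u : u ≥ s)`. -/
def sigmaGE [MeasurableSpace Ω] (X : ℝ → Ω → ℝ) (s : ℝ) : MeasurableSpace Ω :=
  ⨆ u ∈ Set.Ici s, MeasurableSpace.comap (X u) inferInstance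

/-- The σ-algebra `𝔉_{s,u} = σ(𝔉_{≤ s} ∪ 𝔉_{≥ u})`. -/
def sigmaIntv [MeasurableSpace Ω] (X : ℝ → Ω → ℝ) (s u : ℝ) : MeasurableSpace Ω :=
  sigmaLE X s ⊔ sigmaGE X u

/-- A family of polynomial martingales for the process `X`:
`M n (·,t)` is a polynomial of degree exactly `n` with coefficients continuous in `t`,
`M 0 ≡ 1`, `E[M_n(X_t,t)] = 0` for `n ≥ 1`, and each `M_n(X_t,t)` is a martingale
with respect to the natural filtration of `X`. -/
structure IsPolyMartFamily [MeasurableSpace Ω] (μ : Measure Ω) (X : ℝ → Ω → ℝ)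
    (M : ℕ → ℝ → Polynomial ℝ) : Prop where
  meas : ∀ t : ℝ, 0 < t → Measurable (X t)
  moments : ∀ (n : ℕ) (t : ℝ), 0 < t → Integrable (fun ω => X t ω ^ n) μ
  degree_eq : ∀ (n : ℕ) (t : ℝ), 0 < t → (M n t).degree = n
  coeff_cont : ∀ n k : ℕ, ContinuousOn (fun t => (M n t).coeff k) (Set.Ioi 0)
  zeroth : ∀ t : ℝ, 0 < t → M 0 t = 1
  mean_zero : ∀ n : ℕ, 1 ≤ n → ∀ t : ℝ, 0 < t → ∫ ω, (M n t).eval (X t ω) ∂μ = 0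
  mart : ∀ (n : ℕ) (s t : ℝ), 0 < s → s < t →
    μ[fun ω => (M n t).eval (X t ω) | sigmaLE X s]
      =ᵐ[μ] fun ω => (M n s).eval (X s ω)

/-- `m_n(t) = E[M_n(X_t,t)²]`. -/
def mFun [MeasurableSpace Ω] (μ : Measure Ω) (X : ℝ → Ω → ℝ)
    (M : ℕ → ℝ → Polynomial ℝ) (n : ℕ) (t : ℝ) : ℝ :=
  ∫ ω, ((M n t).eval (X t ω)) ^ 2 ∂μ

/-- Standing regularity assumptions on the functions `m_n`: each `m_n` is continuous,
nondecreasing and strictly positive on `(0,∞)` and `m_n(s) → 0` as `s → 0+`. -/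
structure MRegular [MeasurableSpace Ω] (μ : Measure Ω) (X : ℝ → Ω → ℝ)
    (M : ℕ → ℝ → Polynomial ℝ) : Prop where
  cont : ∀ n : ℕ, ContinuousOn (mFun μ X M n) (Set.Ioi 0)
  mono : ∀ n : ℕ, MonotoneOn (mFun μ X M n) (Set.Ioi 0)
  pos : ∀ (n : ℕ) (t : ℝ), 0 < t → 0 < mFun μ X M n t
  tendsto_zero : ∀ n : ℕ, Tendsto (mFun μ X M n) (nhdsWithin 0 (Set.Ioi 0)) (nhds 0)

/-- A Markov process with polynomial regression (MPR): `X` is Markov, the moment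
generating function of each `X_t` exists in a neighbourhood of `0`, and every
conditional moment `E[X_t^n | 𝔉_{≤ s}]` is a polynomial of degree `n` in `X_s`. -/
structure IsMPR [MeasurableSpace Ω] (μ : Measure Ω) (X : ℝ → Ω → ℝ) : Prop where
  meas : ∀ t : ℝ, 0 < t → Measurable (X t)
  moments : ∀ (n : ℕ) (t : ℝ), 0 < t → Integrable (fun ω => X t ω ^ n) μ
  markov : ∀ (s t : ℝ), 0 < s → s < t → ∀ f : ℝ → ℝ, Measurable f →
    Integrable (fun ω => f (X t ω)) μ →
    μ[fun ω => f (X t ω) | sigmaLE X s]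
      =ᵐ[μ] μ[fun ω => f (X t ω) | MeasurableSpace.comap (X s) inferInstance]
  mgf : ∀ t : ℝ, 0 < t → ∃ α : ℝ, 0 < α ∧
    Integrable (fun ω => Real.exp (α * |X t ω|)) μ
  polyReg : ∀ (n : ℕ) (s t : ℝ), 0 < s → s < t → ∃ p : Polynomial ℝ,
    p.degree = n ∧
      μ[fun ω => X t ω ^ n | sigmaLE X s] =ᵐ[μ] fun ω => p.eval (X s ω)

/-- `X` has independent increments: for all `0 < s < t` the increment `X_t - X_s`
is independent of `𝔉_{≤ s}`. -/
def HasIndepIncrements [MeasurableSpace Ω] (μ : Measure Ω) (X : ℝ → Ω → ℝ) : Prop :=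
  ∀ s t : ℝ, 0 < s → s < t →
    Indep (MeasurableSpace.comap (fun ω => X t ω - X s ω) inferInstance) (sigmaLE X s) μ

section CoeffContinuous

variable {E R : Type*} [TopologicalSpace E]

def CoeffContinuousOn [Semiring R] [TopologicalSpace R] (P : E → R[X]) (S : Set E) : Prop :=
  ∀ i, ContinuousOn (fun e => (P e).coeff i) S

namespace CoeffContinuousOn

variable {S : Set E}

lemma comp [Semiring R] [TopologicalSpace R] {F : Type*} [TopologicalSpace F] {P : F → R[X]}
    {T : Set F} {g : E → F} (hP : CoeffContinuousOn P T) (hg : ContinuousOn g S)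
    (hST : Set.MapsTo g S T) : CoeffContinuousOn (fun e => P (g e)) S :=
  fun i => (hP i).comp hg hST

lemma sub [Ring R] [TopologicalSpace R] [IsTopologicalRing R] {P Q : E → R[X]}
    (hP : CoeffContinuousOn P S) (hQ : CoeffContinuousOn Q S) :
    CoeffContinuousOn (fun e => P e - Q e) S := fun i => by
  simp only [coeff_sub]
  exact (hP i).sub (hQ i)

lemma mul [Semiring R] [TopologicalSpace R] [IsTopologicalSemiring R] {P Q : E → R[X]}
    (hP : CoeffContinuousOn P S) (hQ : CoeffContinuousOn Q S) :
    CoeffContinuousOn (fun e => P e * Q e) S := fun i => by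
  simpa only [coeff_mul] using
    continuousOn_finsetSum _ fun x _ => (hP x.1).mul (hQ x.2)

lemma C_mul [Semiring R] [TopologicalSpace R] [IsTopologicalSemiring R] {P : E → R[X]}
    (hP : CoeffContinuousOn P S) {c : E → R} (hc : ContinuousOn c S) :
    CoeffContinuousOn (fun e => C (c e) * P e) S := fun i => by
  simp only [coeff_C_mul]
  exact hc.mul (hP i)

lemma sum [Semiring R] [TopologicalSpace R] [IsTopologicalSemiring R] {ι : Type*}
    (L : Finset ι) {P : ι → E → R[X]} (hP : ∀ l ∈ L, CoeffContinuousOn (P l) S) :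
    CoeffContinuousOn (fun e => ∑ l ∈ L, P l e) S := fun i => by
  simpa only [finsetSum_coeff] using continuousOn_finsetSum L fun l hl => hP l hl i

lemma exists_eq_sum_C_mul [Field R] [TopologicalSpace R] [IsTopologicalDivisionRing R]
    {B : ℕ → E → R[X]} (hB : ∀ l, CoeffContinuousOn (B l) S)
    (hBdeg : ∀ l, ∀ e ∈ S, (B l e).degree = l) {d : ℕ} {P : E → R[X]}
    (hP : CoeffContinuousOn P S) (hPdeg : ∀ e ∈ S, (P e).degree < d) :
    ∃ c : ℕ → E → R, (∀ l, ContinuousOn (c l) S) ∧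
      ∀ e ∈ S, P e = ∑ l ∈ range d, C (c l e) * B l e := by
  induction d generalizing P with
  | zero =>
    refine ⟨0, fun _ => continuousOn_const, fun e he => ?_⟩
    simpa using hPdeg e he
  | succ d ih =>
    have hBd : ∀ e ∈ S, (B d e).coeff d ≠ 0 := fun e he => coeff_ne_zero_of_eq_degree (hBdeg d e he)
    set γ : E → R := fun e => (P e).coeff d / (B d e).coeff d
    have hγ : ContinuousOn γ S := (hP d).div (hB d d) hBd
    obtain ⟨c, hc, hPc⟩ := ih (P := fun e => P e - C (γ e) * B d e) (hP.sub ((hB d).C_mul hγ))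
      fun e he => by
        rw [degree_lt_iff_coeff_zero]
        intro m hm
        rcases hm.eq_or_lt with rfl | hm
        · simp [γ, hBd e he]
        · have hP0 := (degree_lt_iff_coeff_zero _ _).1 (hPdeg e he) m hm
          have hB0 := coeff_eq_zero_of_degree_lt (p := B d e) (n := m)
            (by rw [hBdeg d e he]; exact_mod_cast hm)
          simp [hP0, hB0]
    refine ⟨Function.update c d γ, fun l => ?_, fun e he => ?_⟩
    · rcases eq_or_ne l d with rfl | hl
      · simpa using hγ
      · simpa [hl] using hc l
    · rw [sum_range_succ, Function.update_self, sum_congr rfl fun l hl => by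
        rw [Function.update_of_ne (mem_range.1 hl).ne], ← hPc e he, sub_add_cancel]

end CoeffContinuousOn

end CoeffContinuous

section Moments

variable [MeasurableSpace Ω] {μ : Measure Ω}

lemma integrable_eval_of_integrable_pow {f : Ω → ℝ}
    (hf : ∀ n : ℕ, Integrable (fun ω => f ω ^ n) μ) (p : ℝ[X]) :
    Integrable (fun ω => p.eval (f ω)) μ := by
  simp only [eval_eq_sum_range]
  exact integrable_finsetSum _ fun i _ => (hf i).const_mul _

lemma memLp_eval_of_integrable_pow {f : Ω → ℝ} (hfm : AEStronglyMeasurable f μ)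
    (hf : ∀ n : ℕ, Integrable (fun ω => f ω ^ n) μ) (p : ℝ[X]) (q : ℕ) :
    MemLp (fun ω => p.eval (f ω)) q μ := by
  have hpf : AEStronglyMeasurable (fun ω => p.eval (f ω)) μ :=
    p.continuous.comp_aestronglyMeasurable hfm
  rcases eq_or_ne q 0 with rfl | hq
  · simpa using hpf
  refine (integrable_norm_rpow_iff hpf (by simpa) (by simp)).1 ?_
  simpa [abs_pow] using (integrable_eval_of_integrable_pow hf (p ^ q)).abs

lemma integrable_prod_of_memLp_card [IsFiniteMeasure μ] {𝕜 ι : Type*} [NormedCommRing 𝕜]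
    [Fintype ι] {f : ι → Ω → 𝕜} (hf : ∀ i, MemLp (f i) (Fintype.card ι) μ) :
    Integrable (fun ω => ∏ i, f i ω) μ := by
  rcases isEmpty_or_nonempty ι with hι | hι
  · simp
  have h := MemLp.prod' (s := univ) fun i _ => hf i
  rw [sum_const, card_univ, nsmul_eq_mul, ENNReal.mul_inv_cancel (by simp) (by simp),
    inv_one] at h
  exact memLp_one_iff_integrable.1 h

end Moments

section Filtration

variable [MeasurableSpace Ω] {X : ℝ → Ω → ℝ}

lemma sigmaLE_le (hX : ∀ t, 0 < t → Measurable (X t)) (s : ℝ) :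
    sigmaLE X s ≤ ‹MeasurableSpace Ω› :=
  iSup₂_le fun u hu => (hX u hu.1).comap_le

lemma sigmaLE_mono {s t : ℝ} (hst : s ≤ t) : sigmaLE X s ≤ sigmaLE X t :=
  biSup_mono fun _ hu => ⟨hu.1, hu.2.trans hst⟩

lemma measurable_sigmaLE {u s : ℝ} (hu : 0 < u) (hus : u ≤ s) :
    Measurable[sigmaLE X s] (X u) :=
  Measurable.of_comap_le <| le_iSup₂ (f := fun u _ => MeasurableSpace.comap (X u) inferInstance)
    u ⟨hu, hus⟩

lemma stronglyMeasurable_eval_sigmaLE {u s : ℝ} (hu : 0 < u) (hus : u ≤ s) (p : ℝ[X]) :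
    StronglyMeasurable[sigmaLE X s] fun ω => p.eval (X u ω) :=
  (p.continuous.measurable.comp (measurable_sigmaLE hu hus)).stronglyMeasurable

end Filtration

def increasingTimes (n : ℕ) : Set (Fin (n + 1) → ℝ) := {u | 0 < u 0 ∧ StrictMono u}

lemma pos_of_mem_increasingTimes {n : ℕ} {u : Fin (n + 1) → ℝ} (hu : u ∈ increasingTimes n)
    (i : Fin (n + 1)) : 0 < u i :=
  hu.1.trans_le (hu.2.monotone (Fin.zero_le i))

lemma tail_mem_increasingTimes {n : ℕ} {u : Fin (n + 2) → ℝ} (hu : u ∈ increasingTimes (n + 1)) :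
    Fin.tail u ∈ increasingTimes n :=
  ⟨pos_of_mem_increasingTimes hu 1, hu.2.comp (Fin.strictMono_succ)⟩

namespace IsPolyMartFamily

variable [MeasurableSpace Ω] {μ : Measure Ω} {X : ℝ → Ω → ℝ} {M : ℕ → ℝ → ℝ[X]}

lemma integrable_eval (hM : IsPolyMartFamily μ X M) {t : ℝ} (ht : 0 < t) (p : ℝ[X]) :
    Integrable (fun ω => p.eval (X t ω)) μ :=
  integrable_eval_of_integrable_pow (fun n => hM.moments n t ht) p

lemma integrable_prod_eval [IsFiniteMeasure μ] (hM : IsPolyMartFamily μ X M) {ι : Type*}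
    [Fintype ι] {u : ι → ℝ} (hu : ∀ i, 0 < u i) (P : ι → ℝ[X]) :
    Integrable (fun ω => ∏ i, (P i).eval (X (u i) ω)) μ :=
  integrable_prod_of_memLp_card fun i => memLp_eval_of_integrable_pow
    (hM.meas _ (hu i)).aestronglyMeasurable (fun n => hM.moments n _ (hu i)) _ _

lemma condExp_sum_mul_eval (hM : IsPolyMartFamily μ X M) {s t : ℝ} (hs : 0 < s) (hst : s < t)
    (L : Finset ℕ) (a : ℕ → ℝ) :
    μ[fun ω => ∑ l ∈ L, a l * (M l t).eval (X t ω) | sigmaLE X s]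
      =ᵐ[μ] fun ω => ∑ l ∈ L, a l * (M l s).eval (X s ω) := by
  have hsum := condExp_finsetSum (μ := μ) (s := L)
    (fun l _ => (hM.integrable_eval (hs.trans hst) (M l t)).const_mul (a l)) (sigmaLE X s)
  rw [Finset.sum_fn] at hsum
  have hterm : ∀ᵐ ω ∂μ, ∀ l, μ[fun ω => a l * (M l t).eval (X t ω) | sigmaLE X s] ω
      = a l * (M l s).eval (X s ω) := by
    rw [ae_all_iff]
    intro l
    filter_upwards [condExp_smul (μ := μ) (a l) (fun ω => (M l t).eval (X t ω)) (sigmaLE X s),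
      hM.mart l s t hs hst] with ω hsmul hmart
    rw [Pi.smul_apply, hmart, smul_eq_mul] at hsmul
    exact hsmul
  filter_upwards [hsum, hterm] with ω hsum hterm
  rw [hsum, Finset.sum_apply]
  exact sum_congr rfl fun l _ => hterm l

lemma condExp_eq_sum_of_condExp_eq_eval [IsFiniteMeasure μ] (hM : IsPolyMartFamily μ X M)
    {s t : ℝ} (hs : 0 < s) (hst : s < t) {G : Ω → ℝ} {P : ℝ[X]} {L : Finset ℕ} {a : ℕ → ℝ}
    (hG : μ[G | sigmaLE X t] =ᵐ[μ] fun ω => P.eval (X t ω))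
    (hP : P = ∑ l ∈ L, C (a l) * M l t) :
    μ[G | sigmaLE X s] =ᵐ[μ] fun ω => ∑ l ∈ L, a l * (M l s).eval (X s ω) := by
  have hG' : μ[G | sigmaLE X t] =ᵐ[μ] fun ω => ∑ l ∈ L, a l * (M l t).eval (X t ω) := by
    simpa [hP, eval_finsetSum] using hG
  calc μ[G | sigmaLE X s]
      =ᵐ[μ] μ[μ[G | sigmaLE X t] | sigmaLE X s] :=
        (condExp_condExp_of_le (sigmaLE_mono hst.le) (sigmaLE_le hM.meas t)).symm
    _ =ᵐ[μ] μ[fun ω => ∑ l ∈ L, a l * (M l t).eval (X t ω) | sigmaLE X s] := condExp_congr_ae hG'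
    _ =ᵐ[μ] _ := hM.condExp_sum_mul_eval hs hst L a

lemma condExp_eval_mul_eq_eval [IsFiniteMeasure μ] (hM : IsPolyMartFamily μ X M)
    {s t : ℝ} (hs : 0 < s) (hst : s < t) {p : ℝ[X]} {G : Ω → ℝ} (hG : Integrable G μ)
    (hpG : Integrable (fun ω => p.eval (X s ω) * G ω) μ) {P : ℝ[X]} {L : Finset ℕ} {a : ℕ → ℝ}
    (hGt : μ[G | sigmaLE X t] =ᵐ[μ] fun ω => P.eval (X t ω))
    (hP : P = ∑ l ∈ L, C (a l) * M l t) :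
    μ[fun ω => p.eval (X s ω) * G ω | sigmaLE X s]
      =ᵐ[μ] fun ω => (p * ∑ l ∈ L, C (a l) * M l s).eval (X s ω) := by
  filter_upwards [condExp_mul_of_stronglyMeasurable_left
      (stronglyMeasurable_eval_sigmaLE hs le_rfl p) hpG hG,
    hM.condExp_eq_sum_of_condExp_eq_eval hs hst hGt hP] with ω hmul hsum
  refine hmul.trans ?_
  simp only [Pi.mul_apply, hsum, eval_mul, eval_finsetSum, eval_C]

lemma coeffContinuousOn_comp (hM : IsPolyMartFamily μ X M) (l : ℕ) {E : Type*}
    [TopologicalSpace E] {S : Set E} {τ : E → ℝ} (hτ : ContinuousOn τ S)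
    (hτS : Set.MapsTo τ S (Set.Ioi 0)) : CoeffContinuousOn (fun e => M l (τ e)) S :=
  CoeffContinuousOn.comp (hM.coeff_cont l) hτ hτS

lemma exists_eq_sum_C_mul (hM : IsPolyMartFamily μ X M) {E : Type*} [TopologicalSpace E]
    {S : Set E} {τ : E → ℝ} (hτ : ContinuousOn τ S) (hτS : Set.MapsTo τ S (Set.Ioi 0))
    {P : E → ℝ[X]} {d : ℕ} (hP : CoeffContinuousOn P S) (hPdeg : ∀ e ∈ S, (P e).natDegree ≤ d) :
    ∃ c : ℕ → E → ℝ, (∀ l, ContinuousOn (c l) S) ∧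
      ∀ e ∈ S, P e = ∑ l ∈ range (d + 1), C (c l e) * M l (τ e) :=
  hP.exists_eq_sum_C_mul (fun l => hM.coeffContinuousOn_comp l hτ hτS)
    (fun l _ he => hM.degree_eq l _ (hτS he))
    fun e he => degree_le_natDegree.trans_lt (by exact_mod_cast Nat.lt_succ_of_le (hPdeg e he))

lemma natDegree_sum_C_mul_le (hM : IsPolyMartFamily μ X M) {t : ℝ} (ht : 0 < t) (d : ℕ)
    (a : ℕ → ℝ) : (∑ l ∈ range (d + 1), C (a l) * M l t).natDegree ≤ d :=
  natDegree_sum_le_of_forall_le _ _ fun l hl => natDegree_C_mul_le _ _ |>.trans <|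
    (natDegree_eq_of_degree_eq_some (hM.degree_eq l t ht)).trans_le (mem_range_succ_iff.1 hl)

lemma exists_condExp_prod_eq_eval [IsFiniteMeasure μ] (hM : IsPolyMartFamily μ X M) :
    ∀ (n : ℕ) (k : Fin (n + 1) → ℕ), ∃ Q : (Fin (n + 1) → ℝ) → ℝ[X],
      CoeffContinuousOn Q (increasingTimes n) ∧
      (∀ u ∈ increasingTimes n, (Q u).natDegree ≤ ∑ i, k i) ∧
      ∀ u ∈ increasingTimes n,
        μ[fun ω => ∏ i, (M (k i) (u i)).eval (X (u i) ω) | sigmaLE X (u 0)]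
          =ᵐ[μ] fun ω => (Q u).eval (X (u 0) ω)
  | 0, k => by
    refine ⟨fun u => M (k 0) (u 0),
      hM.coeffContinuousOn_comp _ (continuous_apply 0).continuousOn fun u hu => hu.1,
      fun u hu => by simp [natDegree_eq_of_degree_eq_some (hM.degree_eq _ _ hu.1)],
      fun u hu => .of_eq ?_⟩
    simp only [Fin.prod_univ_succ, Fin.prod_univ_zero, mul_one]
    exact condExp_of_stronglyMeasurable (sigmaLE_le hM.meas _)
      (stronglyMeasurable_eval_sigmaLE hu.1 le_rfl _) (hM.integrable_eval hu.1 _)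
  | n + 1, k => by
    obtain ⟨Q, hQc, hQdeg, hQ⟩ := hM.exists_condExp_prod_eq_eval n (Fin.tail k)
    obtain ⟨c, hc, hQexp⟩ := hM.exists_eq_sum_C_mul (continuous_apply 1).continuousOn
      (fun u hu => pos_of_mem_increasingTimes hu 1)
      (hQc.comp (continuous_pi fun i => continuous_apply i.succ).continuousOn
        fun u hu => tail_mem_increasingTimes hu)
      fun u hu => hQdeg _ (tail_mem_increasingTimes hu)
    refine ⟨fun u => M (k 0) (u 0) * ∑ l ∈ range ((∑ i, Fin.tail k i) + 1), C (c l u) * M l (u 0),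
      ?_, fun u hu => ?_, fun u hu => ?_⟩
    · have hτ₀ : ContinuousOn (fun u : Fin (n + 2) → ℝ => u 0) (increasingTimes (n + 1)) :=
        (continuous_apply 0).continuousOn
      exact (hM.coeffContinuousOn_comp _ hτ₀ fun u hu => hu.1).mul <| CoeffContinuousOn.sum _
        fun l _ => (hM.coeffContinuousOn_comp l hτ₀ fun u hu => hu.1).C_mul (hc l)
    · rw [Fin.sum_univ_succ (f := k)]
      exact natDegree_mul_le.trans (add_le_add
        (natDegree_eq_of_degree_eq_some (hM.degree_eq _ _ hu.1)).le
        (hM.natDegree_sum_C_mul_le hu.1 _ _))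
    · have hpos := pos_of_mem_increasingTimes hu
      have hF : (fun ω => ∏ i, (M (k i) (u i)).eval (X (u i) ω)) = fun ω =>
          (M (k 0) (u 0)).eval (X (u 0) ω) *
            ∏ i, (M (Fin.tail k i) (Fin.tail u i)).eval (X (Fin.tail u i) ω) :=
        funext fun ω => Fin.prod_univ_succ _
      rw [hF]
      exact hM.condExp_eval_mul_eq_eval hu.1 (hu.2 (Fin.succ_pos 0))
        (hM.integrable_prod_eval (u := Fin.tail u) (fun i => hpos i.succ) _)
        (hF ▸ hM.integrable_prod_eval hpos _)
        (hQ (Fin.tail u) (tail_mem_increasingTimes hu)) (hQexp u hu)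

end IsPolyMartFamily

theorem condExp_product_of_martingales_general
    [MeasurableSpace Ω] (μ : Measure Ω) [IsProbabilityMeasure μ]
    (X : ℝ → Ω → ℝ) (M : ℕ → ℝ → Polynomial ℝ)
    (hM : IsPolyMartFamily μ X M)
    (n : ℕ) (hn : 1 ≤ n) (k : Fin n → ℕ) :
    ∃ φ : ℕ → (Fin n → ℝ) → ℝ,
      (∀ j : ℕ, j ≤ ∑ i, k i →
        ContinuousOn (φ j) {u : Fin n → ℝ | 0 < u ⟨0, hn⟩ ∧ StrictMono u}) ∧
      ∀ (s : ℝ) (u : Fin n → ℝ), 0 < s → (∀ i, s < u i) → StrictMono u →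
        μ[fun ω => ∏ i, (M (k i) (u i)).eval (X (u i) ω) | sigmaLE X s]
          =ᵐ[μ] fun ω => ∑ j ∈ Finset.range ((∑ i, k i) + 1),
            φ j u * (M j s).eval (X s ω) := by
  obtain ⟨n, rfl⟩ : ∃ m, n = m + 1 := ⟨n - 1, by omega⟩
  obtain ⟨Q, hQc, hQdeg, hQ⟩ := hM.exists_condExp_prod_eq_eval n k
  obtain ⟨φ, hφc, hφ⟩ := hM.exists_eq_sum_C_mul (continuous_apply 0).continuousOn
    (fun u hu => hu.1) hQc hQdeg
  refine ⟨φ, fun j _ => hφc j, fun s u hs hsu hu => ?_⟩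
  have hmem : u ∈ increasingTimes n := ⟨hs.trans (hsu 0), hu⟩
  exact hM.condExp_eq_sum_of_condExp_eq_eval hs (hsu 0) (hQ u hmem) (hφ u hmem)

/-- Lemma aux: For an MPR process with polynomial martingales, the
conditional expectation of a product `M_{k_1}(u_1) ⋯ M_{k_n}(u_n)` given `𝔉_{≤s}`
(with `s < u_1 < ⋯ < u_n`) is `∑_{j=0}^{k_1+⋯+k_n} φ_j(u_1,…,u_n) M_j(s)` for some
continuous functions `φ_j`. -/
theorem condExp_product_of_martingales
    [MeasurableSpace Ω] (μ : Measure Ω) [IsProbabilityMeasure μ]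
    (X : ℝ → Ω → ℝ) (M : ℕ → ℝ → Polynomial ℝ)
    (hMPR : IsMPR μ X) (hM : IsPolyMartFamily μ X M)
    (n : ℕ) (hn : 1 ≤ n) (k : Fin n → ℕ) :
    ∃ φ : ℕ → (Fin n → ℝ) → ℝ,
      (∀ j : ℕ, j ≤ ∑ i, k i →
        ContinuousOn (φ j) {u : Fin n → ℝ | 0 < u ⟨0, hn⟩ ∧ StrictMono u}) ∧
      ∀ (s : ℝ) (u : Fin n → ℝ), 0 < s → (∀ i, s < u i) → StrictMono u →
        μ[fun ω => ∏ i, (M (k i) (u i)).eval (X (u i) ω) | sigmaLE X s]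
          =ᵐ[μ] fun ω => ∑ j ∈ Finset.range ((∑ i, k i) + 1),
            φ j u * (M j s).eval (X s ω) :=
  condExp_product_of_martingales_general μ X M hM n hn k
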